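/- If q ∈ QC is an odd function (q(t) = −q(1/t)), then the Gelfand transform of q vanishes on M_1^0(QC) and on M_{−1}^0(QC). -/
import Mathlib


open MeasureTheory Real Filter Topology

noncomputable section

/-- The `n`-th Fourier coefficient of `f : ℝ → ℂ` (representing `x ↦ f(e^{ix})`). -/
def fourierCoef (f : ℝ → ℂ) (n : ℤ) : ℂ :=
  (1 / (2 * π)) * ∫ x in (0 : ℝ)..(2 * π), f x * Complex.exp (-(Complex.I * n * x))

/-- `L^∞(T)`, modeled as bounded measurable `2π`-periodic functions `ℝ → ℂ`. -/
def LinfT : Set (ℝ → ℂ) :=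
  {f | Function.Periodic f (2 * π) ∧ Measurable f ∧ ∃ C, ∀ x, ‖f x‖ ≤ C}

/-- `C(T)`: continuous `2π`-periodic functions. -/
def CtsT : Set (ℝ → ℂ) := {f | Function.Periodic f (2 * π) ∧ Continuous f}

/-- The Hardy space `H^∞`: bounded functions whose negative Fourier coefficients vanish. -/
def HinfT : Set (ℝ → ℂ) := {f ∈ LinfT | ∀ n : ℤ, n < 0 → fourierCoef f n = 0}

/-- The conjugate Hardy space: bounded functions whose positive Fourier coefficients vanish. -/
def HinfBarT : Set (ℝ → ℂ) := {f ∈ LinfT | ∀ n : ℤ, 0 < n → fourierCoef f n = 0}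

/-- The quasicontinuous functions `QC = (C + H^∞) ∩ (C + conj(H^∞))`. -/
def QCset : Set (ℝ → ℂ) :=
  {f | (∃ c ∈ CtsT, ∃ h ∈ HinfT, f = c + h) ∧ (∃ c ∈ CtsT, ∃ h ∈ HinfBarT, f = c + h)}

/-- The flip `q̃(t) = q(1/t)`, i.e. `q̃(e^{ix}) = q(e^{-ix})`. -/
def flipF (f : ℝ → ℂ) : ℝ → ℂ := fun x => f (-x)

/-- The even quasicontinuous functions `Q̃C = {q ∈ QC : q = q̃}`. -/
def tQCset : Set (ℝ → ℂ) := {f ∈ QCset | flipF f = f}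

/-- The even continuous functions `C̃(T)`. -/
def evContT : Set (ℝ → ℂ) := {f ∈ CtsT | flipF f = f}

/-- The piecewise continuous functions `PC`: `2π`-periodic functions having one-sided
limits at every point. -/
def PCset : Set (ℝ → ℂ) :=
  {p | Function.Periodic p (2 * π) ∧
    ∀ θ : ℝ, (∃ l : ℂ, Tendsto p (𝓝[>] θ) (𝓝 l)) ∧ (∃ l : ℂ, Tendsto p (𝓝[<] θ) (𝓝 l))}

/-- `ξ` is a character (multiplicative linear functional of norm `1`) of the subalgebra of
`L^∞(T)` whose underlying set is `S`; only the values of `ξ` on `S` are relevant. -/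
def IsChar (S : Set (ℝ → ℂ)) (ξ : (ℝ → ℂ) → ℂ) : Prop :=
  (∀ p ∈ S, ∀ q ∈ S, ξ (p + q) = ξ p + ξ q) ∧
  (∀ p ∈ S, ∀ q ∈ S, ξ (p * q) = ξ p * ξ q) ∧
  (∀ (c : ℂ), ∀ q ∈ S, ξ (c • q) = c * ξ q) ∧
  ξ 1 = 1 ∧
  (∀ q ∈ S, ∀ C : ℝ, (∀ x, ‖q x‖ ≤ C) → ‖ξ q‖ ≤ C)

/-- The moving average `δ_{λ,τ}(a) = (λ/2π) ∫_{θ-π/λ}^{θ+π/λ} a(e^{ix}) dx`, `τ = e^{iθ}`. -/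
def movAvg (a : ℝ → ℂ) (lam θ : ℝ) : ℂ :=
  (lam / (2 * π)) * ∫ x in (θ - π / lam)..(θ + π / lam), a x

/-- `ξ ∈ M_τ^0(S)` (`τ = e^{iθ}`): `ξ` is a character of (the algebra with underlying set) `S`
lying in the weak-* closure of the moving-average functionals `{δ_{λ,τ} : λ ∈ [1,∞)}`. -/
def InM0 (S : Set (ℝ → ℂ)) (θ : ℝ) (ξ : (ℝ → ℂ) → ℂ) : Prop :=
  IsChar S ξ ∧
  ∀ qs : List (ℝ → ℂ), (∀ q ∈ qs, q ∈ S) → ∀ ε : ℝ, 0 < ε →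
    ∃ lam : ℝ, 1 ≤ lam ∧ ∀ q ∈ qs, ‖ξ q - movAvg q lam θ‖ < ε

/-- `ξ ∈ M_τ(S)` (`τ = e^{iθ}`): the fiber condition `ξ(f) = f(τ)` for all continuous `f`
belonging to `S`. -/
def InFiber (S : Set (ℝ → ℂ)) (θ : ℝ) (ξ : (ℝ → ℂ) → ℂ) : Prop :=
  IsChar S ξ ∧ ∀ f ∈ CtsT ∩ S, ξ f = f θ

/-- `ξ ∈ M_τ^+(QC)`: `ξ(f) = 0` whenever `limsup_{t→τ+0}|f(t)| = 0`, `f ∈ QC`. -/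
def InMplus (θ : ℝ) (ξ : (ℝ → ℂ) → ℂ) : Prop :=
  IsChar QCset ξ ∧
  ∀ f ∈ QCset, Filter.limsup (fun x => ‖f x‖) (𝓝[>] θ) = 0 → ξ f = 0

/-- `ξ ∈ M_τ^-(QC)`: `ξ(f) = 0` whenever `limsup_{t→τ-0}|f(t)| = 0`, `f ∈ QC`. -/
def InMminus (θ : ℝ) (ξ : (ℝ → ℂ) → ℂ) : Prop :=
  IsChar QCset ξ ∧
  ∀ f ∈ QCset, Filter.limsup (fun x => ‖f x‖) (𝓝[<] θ) = 0 → ξ f = 0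

/-- The conjugate character `ξ'(q) = ξ(q̃)`. -/
def conjChar (ξ : (ℝ → ℂ) → ℂ) : (ℝ → ℂ) → ℂ := fun q => ξ (flipF q)

lemma odd_interval_integral_zero (f : ℝ → ℂ) (hf : ∀ x, f (-x) = -f x) (a : ℝ) :
    ∫ x in (-a)..a, f x = 0 := by
  have h1 : ∫ x in (-a)..a, f (-x) = ∫ x in (-a)..a, f x := by
    rw [intervalIntegral.integral_comp_neg f, neg_neg]
  have h2 : ∫ x in (-a)..a, f (-x) = -∫ x in (-a)..a, f x := by
    simp_rw [hf]
    exact intervalIntegral.integral_neg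
  have h := h1.symm.trans h2
  have h3 : (∫ x in (-a)..a, f x) + ∫ x in (-a)..a, f x = 0 := by
    linear_combination h
  exact add_self_eq_zero.mp h3

/-- If `q ∈ QC` is odd (`q(t) = -q(1/t)`), then the Gelfand transform of `q` vanishes on
`M_1^0(QC)` (angle `θ = 0`) and on `M_{-1}^0(QC)` (angle `θ = π`). -/
theorem odd_vanishes_on_M0 (q : ℝ → ℂ) (hq : q ∈ QCset) (hodd : flipF q = -q) :
    (∀ ξ, InM0 QCset 0 ξ → ξ q = 0) ∧ (∀ ξ, InM0 QCset π ξ → ξ q = 0) := by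
  -- q is periodic
  have hqQC := hq
  obtain ⟨⟨c, hc, h, hh, hqe⟩, -⟩ := hq
  have hper : Function.Periodic q (2 * π) := by
    rw [hqe]; exact hc.1.add hh.1.1
  have hoddpt : ∀ x, q (-x) = -q x := fun x => congrFun hodd x
  -- moving averages vanish at θ = 0
  have hm0 : ∀ lam : ℝ, movAvg q lam 0 = 0 := by
    intro lam
    unfold movAvg
    rw [show (0 : ℝ) - π / lam = -(π / lam) by ring, zero_add,
      odd_interval_integral_zero q hoddpt (π / lam), mul_zero]
  -- moving averages vanish at θ = π
  have hmpi : ∀ lam : ℝ, movAvg q lam π = 0 := by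
    intro lam
    unfold movAvg
    have hshift : ∫ x in (π - π / lam)..(π + π / lam), q x
        = ∫ x in (-(π / lam))..(π / lam), q (x + π) := by
      rw [intervalIntegral.integral_comp_add_right q π]
      congr 1 <;> ring
    have hodd' : ∀ x, q (-x + π) = -q (x + π) := by
      intro x
      have h1 : q (-x + π) = q (-x - π) := by
        have := hper (-x - π)
        rw [show -x - π + 2 * π = -x + π by ring] at this
        exact this
      rw [h1, show -x - π = -(x + π) by ring, hoddpt]
    rw [hshift, odd_interval_integral_zero (fun x => q (x + π)) hodd' (π / lam), mul_zero]
  -- conclude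
  have key : ∀ θ : ℝ, (∀ lam : ℝ, movAvg q lam θ = 0) → ∀ ξ, InM0 QCset θ ξ → ξ q = 0 := by
    intro θ hθ ξ hξ
    have hnorm : ∀ ε : ℝ, 0 < ε → ‖ξ q‖ < ε := by
      intro ε hε
      obtain ⟨lam, -, hl⟩ := hξ.2 [q] (by simp [hqQC]) ε hε
      have := hl q (by simp)
      rwa [hθ lam, sub_zero] at this
    by_contra hne
    have : (0:ℝ) < ‖ξ q‖ := norm_pos_iff.mpr hne
    exact absurd (hnorm _ this) (lt_irrefl _)
  exact ⟨key 0 hm0, key π hmpi⟩
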